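/- Let c̃₀ be a constant with 0 < c̃₀² < 1, c̃₀ ≠ 0, and let f satisfy f''(u) - (2c̃₀/(c̃₀²-1)) f'(u)² + 2c̃₀ = 0 on an open interval. Then f(u) = ((1-c̃₀²)/(2c̃₀)) ln |cos((2c̃₀/√(1-c̃₀²)) u - ã)| + b̃ for some constants ã, b̃. -/

import Mathlib

/-!
With `s = √(1 - c₀²)` and `k = 2c₀/s`, the ODE is the Riccati equation `g' = -(k/s)(g² + s²)`
for `g = f'`. Along its solutions `arctan (g/s) + k u` is constant, say `a`, so
`g u = -s tan (k u - a)` with `cos (k u - a) > 0`; since `(s²/(2c₀)) log cos (k u - a)` has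
exactly this derivative, `f` is that function up to an additive constant.
-/

open Real Set

lemma exists_eq_neg_mul_tan_of_hasDerivAt_riccati {S : Set ℝ} (hS : IsOpen S)
    (hS' : IsPreconnected S) {g : ℝ → ℝ} {s k : ℝ} (hs : s ≠ 0)
    (hg : ∀ u ∈ S, HasDerivAt g (-(k / s) * (g u ^ 2 + s ^ 2)) u) :
    ∃ a, ∀ u ∈ S, 0 < cos (k * u - a) ∧ g u = -s * tan (k * u - a) := by
  have hφ : ∀ u ∈ S, HasDerivAt (fun v => arctan (g v / s) + k * v) 0 u := by
    intro u hu
    have h := ((hg u hu).div_const s).arctan.add ((hasDerivAt_id' u).const_mul k)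
    refine h.congr_deriv ?_
    have : 1 + (g u / s) ^ 2 ≠ 0 := by positivity
    field_simp
    ring
  obtain ⟨a, ha⟩ := hS.exists_is_const_of_deriv_eq_zero hS'
    (fun u hu => (hφ u hu).differentiableAt.differentiableWithinAt)
    (fun u hu => (hφ u hu).deriv)
  refine ⟨a, fun u hu => ?_⟩
  have hangle : k * u - a = -arctan (g u / s) := by linarith [ha u hu]
  rw [hangle, cos_neg, tan_neg, tan_arctan]
  exact ⟨cos_arctan_pos _, by field_simp⟩

lemma hasDerivAt_log_cos_mul_sub {k a u : ℝ} (h : cos (k * u - a) ≠ 0) :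
    HasDerivAt (fun v => log (cos (k * v - a))) (-k * tan (k * u - a)) u := by
  refine ((((hasDerivAt_id' u).const_mul k).sub_const a).cos.log h).congr_deriv ?_
  rw [tan_eq_sin_div_cos]
  ring

theorem stmt_14 (c₀ α β : ℝ) (hc₀ : c₀ ≠ 0) (hc₀' : c₀ ^ 2 < 1) (f : ℝ → ℝ)
    (hd1 : ∀ u ∈ Set.Ioo α β, DifferentiableAt ℝ f u)
    (hd2 : ∀ u ∈ Set.Ioo α β, DifferentiableAt ℝ (deriv f) u)
    (hode : ∀ u ∈ Set.Ioo α β,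
      deriv (deriv f) u - (2 * c₀ / (c₀ ^ 2 - 1)) * (deriv f u) ^ 2 + 2 * c₀ = 0) :
    ∃ a b : ℝ, ∀ u ∈ Set.Ioo α β,
      f u = ((1 - c₀ ^ 2) / (2 * c₀)) *
          Real.log |Real.cos ((2 * c₀ / Real.sqrt (1 - c₀ ^ 2)) * u - a)| + b := by
  set s := √(1 - c₀ ^ 2)
  set k := 2 * c₀ / s
  have hs2 : s ^ 2 = 1 - c₀ ^ 2 := sq_sqrt (by linarith)
  have hs : s ≠ 0 := (sqrt_pos.2 (by linarith)).ne'
  have hsk : s * k = 2 * c₀ := mul_div_cancel₀ _ hs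
  have hks : k / s = 2 * c₀ / (1 - c₀ ^ 2) := by rw [← hs2, ← hsk]; field_simp
  have hriccati : ∀ u ∈ Ioo α β,
      HasDerivAt (deriv f) (-(k / s) * (deriv f u ^ 2 + s ^ 2)) u := by
    intro u hu
    refine (hd2 u hu).hasDerivAt.congr_deriv ?_
    have h1 : 1 - c₀ ^ 2 ≠ 0 := by linarith
    have h2 : c₀ ^ 2 - 1 ≠ 0 := by linarith
    have := hode u hu
    rw [hks, hs2]
    field_simp at this ⊢
    linarith
  obtain ⟨a, ha⟩ := exists_eq_neg_mul_tan_of_hasDerivAt_riccati isOpen_Ioo isPreconnected_Ioo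
    hs hriccati
  set F := fun u => (1 - c₀ ^ 2) / (2 * c₀) * log (cos (k * u - a))
  have hF : ∀ u ∈ Ioo α β, HasDerivAt F (deriv f u) u := by
    intro u hu
    refine ((hasDerivAt_log_cos_mul_sub (ha u hu).1.ne').const_mul _).congr_deriv ?_
    rw [(ha u hu).2, ← hs2]
    field_simp
    rw [hsk]
  obtain ⟨b, hb⟩ := isOpen_Ioo.exists_eq_add_of_deriv_eq isPreconnected_Ioo
    (fun u hu => (hd1 u hu).differentiableWithinAt)
    (fun u hu => (hF u hu).differentiableAt.differentiableWithinAt)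
    (fun u hu => (hF u hu).deriv.symm)
  exact ⟨a, b, fun u hu => by rw [hb hu, abs_of_pos (ha u hu).1]⟩
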